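/- Let G be a graph with a 𝒢F-elimination forest (F, (B_u)_{u ∈ V(F)}) of height at most η, let X be a minimum feedback vertex set of G, and let u ∈ V(F). Then u has at most η children c in F for which X ∩ tree[c] is not a minimum feedback vertex set of the induced subgraph G_c = G[tree[c]]. -/

import Mathlib

/-- `X` is a feedback vertex set of `G`: removing `X` leaves an acyclic graph. -/
def IsFVS {V : Type} (G : SimpleGraph V) (X : Set V) : Prop :=
  (G.induce Xᶜ).IsAcyclic

/-- `X` is a minimum feedback vertex set of `G`. -/
def IsMinFVS {V : Type} (G : SimpleGraph V) (X : Set V) : Prop :=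
  IsFVS G X ∧ ∀ Y : Set V, IsFVS G Y → X.ncard ≤ Y.ncard

/-- Every connected component of `G[A]` contains at most one vertex of `T`. -/
def SeparatedIn {V : Type} (G : SimpleGraph V) (A T : Set V) : Prop :=
  ∀ (t₁ t₂ : V) (h₁ : t₁ ∈ A) (h₂ : t₂ ∈ A), t₁ ∈ T → t₂ ∈ T →
    (G.induce A).Reachable ⟨t₁, h₁⟩ ⟨t₂, h₂⟩ → t₁ = t₂

/-- `X` misses some vertex of `S`, or leaves two vertices of `T` connected in `G - X`. -/
def BadFor {V : Type} (G : SimpleGraph V) (S T X : Set V) : Prop :=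
  (¬ S ⊆ X) ∨ ¬ SeparatedIn G Xᶜ T
/-- A `𝒢F`-elimination forest of `G` with node type `ι`: a rooted forest given by a
parent function (roots are their own parent, and iterating the parent function from any
node eventually reaches a root), together with bags that partition `V(G)`, such that
every non-leaf bag is a singleton, every leaf bag induces a connected forest, and the
endpoints of every edge of `G` lie in bags that are in ancestor-descendant relation. -/
structure ElimForestOn (V ι : Type) (G : SimpleGraph V) where
  parent : ι → ι
  bag : ι → Set V
  wf : ∀ u : ι, ∃ n : ℕ, parent^[n + 1] u = parent^[n] u
  bag_exists : ∀ v : V, ∃ u : ι, v ∈ bag u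
  bag_unique : ∀ (v : V) (u w : ι), v ∈ bag u → v ∈ bag w → u = w
  nonleaf_singleton : ∀ u : ι, (∃ c : ι, c ≠ u ∧ parent c = u) → ∃ x : V, bag u = {x}
  leaf_forest : ∀ u : ι, (∀ c : ι, parent c = u → c = u) → (G.induce (bag u)).IsAcyclic
  leaf_connected : ∀ u : ι, (∀ c : ι, parent c = u → c = u) → (G.induce (bag u)).Connected
  edge_anc : ∀ v w : V, G.Adj v w → ∀ s t : ι, v ∈ bag s → w ∈ bag t →
    (∃ n : ℕ, parent^[n] t = s) ∨ (∃ n : ℕ, parent^[n] s = t)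

namespace ElimForestOn

variable {V ι : Type} {G : SimpleGraph V}

/-- A node is a leaf when it has no (proper) children. -/
def IsLeaf (E : ElimForestOn V ι G) (u : ι) : Prop :=
  ∀ c : ι, E.parent c = u → c = u

/-- The elimination forest is a tree: it has a unique root. -/
def IsTree (E : ElimForestOn V ι G) : Prop :=
  (∃ r : ι, E.parent r = r) ∧ ∀ u v : ι, E.parent u = u → E.parent v = v → u = v

/-- `tree[c]`: the union of the bags of `c` and of all descendants of `c`. -/
def treeSet (E : ElimForestOn V ι G) (c : ι) : Set V :=
  {v | ∃ w : ι, (∃ n : ℕ, E.parent^[n] w = c) ∧ v ∈ E.bag w}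

/-- The depth of a node: the number of edges on the path to its root. -/
noncomputable def depth (E : ElimForestOn V ι G) (u : ι) : ℕ :=
  sInf {n | E.parent^[n + 1] u = E.parent^[n] u}

/-- The height of the elimination forest: the maximum depth of a node. -/
noncomputable def height (E : ElimForestOn V ι G) : ℕ :=
  sSup (Set.range E.depth)

end ElimForestOn

/-- `X` is a minimum feedback vertex set of the induced subgraph `G[A]`. -/
def IsMinFVSOn {V : Type} (G : SimpleGraph V) (A X : Set V) : Prop :=
  X ⊆ A ∧ (G.induce (A \ X)).IsAcyclic ∧
    ∀ Y : Set V, Y ⊆ A → (G.induce (A \ Y)).IsAcyclic → X.ncard ≤ Y.ncard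

/-!
If more than `η` children `c` of `u` had a non-optimal trace `X ∩ tree[c]`, exchange `X` on each
such subtree for a strictly smaller feedback vertex set of `G_c`, and add the bags of `u` and its
ancestors. These nodes are not leaves, so their bags are singletons, and there are at most
`depth c ≤ η` of them; each bad subtree saves at least one vertex, so the new set is smaller than
`X`. It is still a feedback vertex set: edges leaving `tree[c]` end in the bags of ancestors of `c`,
so a cycle avoiding the new set lies inside one bad subtree or outside all of them.
-/

open SimpleGraph Function

theorem Function.IsPeriodicPt.isFixedPt_of_isFixedPt_iterate {α : Type*} {f : α → α} {x : α}
    {m n : ℕ} (hx : IsPeriodicPt f m x) (hm : 0 < m) (hfix : IsFixedPt f (f^[n] x)) :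
    IsFixedPt f x := by
  have hx_eq : x = f^[n] x :=
    calc x = f^[m * n] x := (hx.mul_const n).eq.symm
      _ = f^[m * n - n] (f^[n] x) := by
        rw [← iterate_add_apply, Nat.sub_add_cancel (Nat.le_mul_of_pos_left n hm)]
      _ = f^[n] x := iterate_fixed hfix _
  rwa [hx_eq]

theorem Finset.ncard_diff_biUnion_union_biUnion_add_card_le {α ι : Type*} [Finite α]
    (T : Finset ι) {X : Set α} {A Y : ι → Set α} (hA : (T : Set ι).PairwiseDisjoint A)
    (hY : ∀ i ∈ T, (Y i).ncard < (X ∩ A i).ncard) :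
    ((X \ ⋃ i ∈ T, A i) ∪ ⋃ i ∈ T, Y i).ncard + T.card ≤ X.ncard := by
  have htrace : (X ∩ ⋃ i ∈ T, A i).ncard = ∑ i ∈ T, (X ∩ A i).ncard := by
    rw [← finsum_mem_coe_finset, Set.inter_iUnion₂]
    exact T.finite_toSet.ncard_biUnion (fun _ _ => Set.toFinite _)
      (hA.mono fun _ => Set.inter_subset_right)
  have hsum : ∑ i ∈ T, (Y i).ncard + T.card ≤ ∑ i ∈ T, (X ∩ A i).ncard := by
    rw [Finset.card_eq_sum_ones, ← Finset.sum_add_distrib]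
    exact Finset.sum_le_sum hY
  calc ((X \ ⋃ i ∈ T, A i) ∪ ⋃ i ∈ T, Y i).ncard + T.card
      ≤ (X \ ⋃ i ∈ T, A i).ncard + ∑ i ∈ T, (Y i).ncard + T.card := by
        gcongr
        exact (Set.ncard_union_le _ _).trans (by gcongr; exact T.set_ncard_biUnion_le Y)
    _ ≤ (X \ ⋃ i ∈ T, A i).ncard + (X ∩ ⋃ i ∈ T, A i).ncard := by omega
    _ = X.ncard := by
      rw [add_comm, Set.ncard_inter_add_ncard_sdiff_eq_ncard X _ (Set.toFinite X)]

namespace SimpleGraph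

variable {V : Type*} {G : SimpleGraph V}

theorem isAcyclic_induce_of_subset {s t : Set V} (hst : s ⊆ t) (ht : (G.induce t).IsAcyclic) :
    (G.induce s).IsAcyclic :=
  ht.embedding (G.induceHomOfLE hst)

theorem Walk.support_subset_of_adj_closed {A : Set V} (hA : ∀ x y, x ∈ A → G.Adj x y → y ∈ A) :
    ∀ {a b : V} (p : G.Walk a b), a ∈ A → ∀ x ∈ p.support, x ∈ A
  | _, _, .nil, ha, x, hx => by
    rw [Walk.support_nil, List.mem_singleton] at hx
    exact hx ▸ ha
  | _, _, .cons hadj p, ha, x, hx => by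
    rw [Walk.support_cons, List.mem_cons] at hx
    rcases hx with rfl | hx
    · exact ha
    · exact p.support_subset_of_adj_closed hA (hA _ _ ha hadj) x hx

/-- A cycle of `G[Z]` through `v` cannot leave the piece `A` chosen for `v`. -/
theorem isAcyclic_induce_of_forall_exists {Z : Set V}
    (h : ∀ v ∈ Z, ∃ A : Set V, v ∈ A ∧ (∀ x y, x ∈ A → x ∈ Z → y ∈ Z → G.Adj x y → y ∈ A) ∧
      (G.induce (A ∩ Z)).IsAcyclic) :
    (G.induce Z).IsAcyclic := by
  intro v w hw
  obtain ⟨A, hvA, hclosed, hacyc⟩ := h v v.2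
  have hsupp : ∀ x ∈ w.support, (x : V) ∈ A :=
    w.support_subset_of_adj_closed (A := Subtype.val ⁻¹' A)
      (fun (x y : Z) hx hxy => hclosed x y hx x.2 y.2 hxy) hvA
  set p := w.map (Embedding.induce (G := G) Z).toHom
  have hp : ∀ x ∈ p.support, x ∈ A ∩ Z := by
    simp only [p, Walk.support_map, List.mem_map]
    rintro _ ⟨x, hx, rfl⟩
    exact ⟨hsupp x hx, x.2⟩
  have hp_cycle : p.IsCycle := hw.map (Embedding.induce (G := G) Z).injective
  refine hacyc (p.induce (A ∩ Z) hp)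
    (.of_map (f := (Embedding.induce (G := G) (A ∩ Z)).toHom) ?_)
  rwa [Walk.map_induce]

end SimpleGraph

theorem IsFVS.exists_lt_of_not_isMinFVSOn {V : Type} {G : SimpleGraph V} {A X : Set V}
    (hX : IsFVS G X) (h : ¬ IsMinFVSOn G A (X ∩ A)) :
    ∃ Y ⊆ A, (G.induce (A \ Y)).IsAcyclic ∧ Y.ncard < (X ∩ A).ncard := by
  have hacyc : (G.induce (A \ (X ∩ A))).IsAcyclic :=
    isAcyclic_induce_of_subset (fun x hx hxX => hx.2 ⟨hxX, hx.1⟩) hX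
  simpa only [IsMinFVSOn, Set.inter_subset_right, hacyc, true_and, not_forall, not_le,
    exists_prop] using h

namespace ElimForestOn

variable {V ι : Type} {G : SimpleGraph V} (E : ElimForestOn V ι G)

def ancestorBags (u : ι) : Set V :=
  {v | ∃ j : ℕ, v ∈ E.bag (E.parent^[j] u)}

theorem isFixedPt_parent_iterate_depth (x : ι) : IsFixedPt E.parent (E.parent^[E.depth x] x) := by
  have : E.depth x ∈ {n | E.parent^[n + 1] x = E.parent^[n] x} :=
    Nat.sInf_mem ⟨_, (E.wf x).choose_spec⟩
  rwa [Set.mem_ofPred_eq, iterate_succ_apply'] at this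

theorem parent_iterate_succ_ne {x : ι} {k : ℕ} (hk : k < E.depth x) :
    E.parent^[k + 1] x ≠ E.parent^[k] x :=
  Nat.notMem_of_lt_sInf hk

theorem parent_iterate_of_depth_le {x : ι} {m : ℕ} (hm : E.depth x ≤ m) :
    E.parent^[m] x = E.parent^[E.depth x] x := by
  rw [← Nat.sub_add_cancel hm, iterate_add_apply,
    iterate_fixed (E.isFixedPt_parent_iterate_depth x)]

theorem depth_le_height [Finite ι] (x : ι) : E.depth x ≤ E.height :=
  le_csSup (Set.finite_range E.depth).bddAbove (Set.mem_range_self x)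

theorem iterate_parent_ne_self_of_parent_ne {c : ι} (hc : E.parent c ≠ c) (j : ℕ) :
    E.parent^[j] (E.parent c) ≠ c := by
  intro h
  have hper : IsPeriodicPt E.parent (j + 1) c := by
    rw [IsPeriodicPt, IsFixedPt, iterate_succ_apply, h]
  obtain ⟨n, hn⟩ := E.wf c
  have hfix : IsFixedPt E.parent (E.parent^[n] c) := by
    rwa [IsFixedPt, ← iterate_succ_apply' E.parent]
  exact hc (hper.isFixedPt_of_isFixedPt_iterate j.succ_pos hfix)

theorem ancestor_comparable {x y z : ι} {a b : ℕ} (hy : E.parent^[a] x = y)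
    (hz : E.parent^[b] x = z) :
    (∃ k, E.parent^[k] y = z) ∨ (∃ k, E.parent^[k] z = y) := by
  rcases Nat.le_total a b with h | h
  · exact .inl ⟨b - a, by rw [← hy, ← iterate_add_apply, Nat.sub_add_cancel h, hz]⟩
  · exact .inr ⟨a - b, by rw [← hz, ← iterate_add_apply, Nat.sub_add_cancel h, hy]⟩

theorem disjoint_treeSet {c c' : ι} (hc : E.parent c ≠ c) (hc' : E.parent c' ≠ c')
    (hsib : E.parent c = E.parent c') (hne : c ≠ c') :
    Disjoint (E.treeSet c) (E.treeSet c') := by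
  rw [Set.disjoint_left]
  rintro v ⟨w, ⟨n, hn⟩, hv⟩ ⟨w', ⟨m, hm⟩, hv'⟩
  obtain rfl := E.bag_unique v w w' hv hv'
  rcases E.ancestor_comparable hn hm with ⟨_ | k, hk⟩ | ⟨_ | k, hk⟩
  · exact hne hk
  · rw [iterate_succ_apply, hsib] at hk
    exact E.iterate_parent_ne_self_of_parent_ne hc' k hk
  · exact hne hk.symm
  · rw [iterate_succ_apply, ← hsib] at hk
    exact E.iterate_parent_ne_self_of_parent_ne hc k hk

theorem mem_ancestorBags_of_adj {c : ι} {v w : V} (hadj : G.Adj v w)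
    (hv : v ∈ E.treeSet c) (hw : w ∉ E.treeSet c) : w ∈ E.ancestorBags (E.parent c) := by
  obtain ⟨s, ⟨n, hn⟩, hvs⟩ := hv
  obtain ⟨t, hwt⟩ := E.bag_exists w
  rcases E.edge_anc v w hadj s t hvs hwt with ⟨a, ha⟩ | ⟨a, ha⟩
  · exact absurd ⟨t, ⟨n + a, by rw [iterate_add_apply, ha, hn]⟩, hwt⟩ hw
  rcases E.ancestor_comparable hn ha with ⟨_ | k, hk⟩ | ⟨k, hk⟩
  · exact absurd ⟨t, ⟨0, hk.symm⟩, hwt⟩ hw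
  · rw [iterate_succ_apply] at hk
    exact ⟨k, hk ▸ hwt⟩
  · exact absurd ⟨t, ⟨k, hk⟩, hwt⟩ hw

/-- Every proper ancestor `parent^[j + 1] c` with `j < depth c` has the child
`parent^[j] c`, so its bag is a singleton. -/
theorem ncard_ancestorBags_parent_le_depth {c : ι} (hc : E.parent c ≠ c) :
    (E.ancestorBags (E.parent c)).ncard ≤ E.depth c := by
  have hsingle : ∀ j ∈ Finset.range (E.depth c),
      ∃ x, E.bag (E.parent^[j + 1] c) = {x} := fun j hj =>
    E.nonleaf_singleton _ ⟨E.parent^[j] c,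
      (E.parent_iterate_succ_ne (Finset.mem_range.mp hj)).symm, (iterate_succ_apply' ..).symm⟩
  have hdepth : 0 < E.depth c := Nat.pos_of_ne_zero fun h => hc (by
    simpa [h] using (E.isFixedPt_parent_iterate_depth c).eq)
  have hsub : E.ancestorBags (E.parent c) ⊆
      ⋃ j ∈ Finset.range (E.depth c), E.bag (E.parent^[j + 1] c) := by
    rintro v ⟨j, hj⟩
    rw [← iterate_succ_apply] at hj
    rw [Set.mem_iUnion₂]
    by_cases hjd : j < E.depth c
    · exact ⟨j, Finset.mem_range.mpr hjd, hj⟩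
    · refine ⟨E.depth c - 1, Finset.mem_range.mpr (by omega), ?_⟩
      rwa [Nat.sub_add_cancel hdepth, ← E.parent_iterate_of_depth_le (m := j + 1) (by omega)]
  have hfin : (⋃ j ∈ Finset.range (E.depth c), E.bag (E.parent^[j + 1] c)).Finite :=
    (Finset.finite_toSet _).biUnion fun j hj => by
      obtain ⟨x, hx⟩ := hsingle j hj
      exact hx ▸ Set.finite_singleton x
  calc (E.ancestorBags (E.parent c)).ncard
      ≤ (⋃ j ∈ Finset.range (E.depth c), E.bag (E.parent^[j + 1] c)).ncard :=
        Set.ncard_le_ncard hsub hfin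
    _ ≤ ∑ j ∈ Finset.range (E.depth c), (E.bag (E.parent^[j + 1] c)).ncard :=
        Finset.set_ncard_biUnion_le _ _
    _ ≤ (Finset.range (E.depth c)).card • 1 :=
        Finset.sum_le_card_nsmul _ _ _ fun j hj => by
          obtain ⟨x, hx⟩ := hsingle j hj
          rw [hx, Set.ncard_singleton]
    _ = E.depth c := by simp

theorem isFVS_exchange_subtrees {X : Set V} (hX : IsFVS G X) {u : ι} (T : Finset ι)
    (hT : ∀ c ∈ T, E.parent c = u) {Y : ι → Set V}
    (hY : ∀ c ∈ T, (G.induce (E.treeSet c \ Y c)).IsAcyclic) :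
    IsFVS G (((X \ ⋃ c ∈ T, E.treeSet c) ∪ ⋃ c ∈ T, Y c) ∪ E.ancestorBags u) := by
  set X' := ((X \ ⋃ c ∈ T, E.treeSet c) ∪ ⋃ c ∈ T, Y c) ∪ E.ancestorBags u
  have hP : ∀ c ∈ T, ∀ {x y}, G.Adj x y → x ∈ E.treeSet c → y ∉ E.treeSet c → y ∈ X' :=
    fun c hc _ _ hxy hx hy => .inr (hT c hc ▸ E.mem_ancestorBags_of_adj hxy hx hy)
  refine isAcyclic_induce_of_forall_exists fun v _ => ?_
  by_cases hv : ∃ c ∈ T, v ∈ E.treeSet c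
  · obtain ⟨c, hc, hvc⟩ := hv
    refine ⟨E.treeSet c, hvc, fun x y hx _ hy hxy => ?_, isAcyclic_induce_of_subset ?_ (hY c hc)⟩
    · by_contra hyc
      exact hy (hP c hc hxy hx hyc)
    · exact fun x ⟨hxc, hxX'⟩ => ⟨hxc, fun hxY => hxX' (.inl (.inr (Set.mem_biUnion hc hxY)))⟩
  · push Not at hv
    refine ⟨{x | ∀ c ∈ T, x ∉ E.treeSet c}, hv, fun x y hx hxX' _ hxy c hc hyc => ?_,
      isAcyclic_induce_of_subset ?_ hX⟩
    · exact hxX' (hP c hc hxy.symm hyc (hx c hc))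
    · refine fun x ⟨hx, hxX'⟩ hxX => hxX' (.inl (.inl ⟨hxX, fun hxU => ?_⟩))
      obtain ⟨c, hc, hxc⟩ := Set.mem_iUnion₂.mp hxU
      exact hx c hc hxc

end ElimForestOn

theorem stmt5 (V ι : Type) [Fintype V] [Fintype ι] (G : SimpleGraph V)
    (E : ElimForestOn V ι G) (η : ℕ) (hheight : E.height ≤ η)
    (X : Set V) (hX : IsMinFVS G X) (u : ι) :
    {c : ι | E.parent c = u ∧ c ≠ u ∧
      ¬ IsMinFVSOn G (E.treeSet c) (X ∩ E.treeSet c)}.ncard ≤ η := by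
  classical
  set S := {c : ι | E.parent c = u ∧ c ≠ u ∧ ¬ IsMinFVSOn G (E.treeSet c) (X ∩ E.treeSet c)}
  by_contra! hS
  have hroot : ∀ c ∈ S, E.parent c ≠ c := fun c ⟨hcu, hne, _⟩ => by rwa [hcu, ne_comm]
  obtain ⟨c₀, hc₀⟩ : S.Nonempty := Set.nonempty_of_ncard_ne_zero (by omega)
  have hP : (E.ancestorBags u).ncard ≤ η := by
    rw [← hc₀.1]
    exact (E.ncard_ancestorBags_parent_le_depth (hroot c₀ hc₀)).trans
      ((E.depth_le_height c₀).trans hheight)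
  choose! Y _ hYacyc hYlt using fun c (hc : c ∈ S) =>
    hX.1.exists_lt_of_not_isMinFVSOn hc.2.2
  rw [Set.ncard_eq_toFinset_card'] at hS
  set T := S.toFinset
  have hTS : ∀ {c}, c ∈ T → c ∈ S := Set.mem_toFinset.mp
  have hdisj : (T : Set ι).PairwiseDisjoint E.treeSet := fun c hc c' hc' hne =>
    E.disjoint_treeSet (hroot c (hTS hc)) (hroot c' (hTS hc'))
      ((hTS hc).1.trans (hTS hc').1.symm) hne
  have hsaving :=
    T.ncard_diff_biUnion_union_biUnion_add_card_le hdisj fun c hc => hYlt c (hTS hc)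
  have hfvs := E.isFVS_exchange_subtrees hX.1 T (fun c hc => (hTS hc).1)
    fun c hc => hYacyc c (hTS hc)
  have hunion := Set.ncard_union_le ((X \ ⋃ c ∈ T, E.treeSet c) ∪ ⋃ c ∈ T, Y c) (E.ancestorBags u)
  have hmin := hX.2 _ hfvs
  omega
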